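/- arXiv:1901.07598 — 3 statements merged into one kernel-verified Lean document; each statement's English description precedes it below -/
import Mathlib

section
/- Under the same second-moment hypothesis on the random projection P, for two finite sets y_1,...,y_{M₁} and z_1,...,z_{M₂} in R^d, define f(P,{y_i}) = (1/M₁)∑_i (d/k)‖P y_i‖² and similarly f(P,{z_j}). Then Cov(f(P,{y_i}), f(P,{z_j})) = (a_{k,d}/(M₁M₂))∑_{i,j}⟨y_i, z_j⟩² − (a_{k,d}/d)·((1/M₁)∑_i‖y_i‖²)·((1/M₂)∑_j‖z_j‖²), where a_{k,d} = 2d(d−k)/(k(d−1)(d+2)). -/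
open Finset MeasureTheory

noncomputable def sqnorm {d : ℕ} (v : Fin d → ℝ) : ℝ := ∑ i, (v i) ^ 2

/-- `f(p, {y_i}) = (1/M)∑_i (d/k)‖p y_i‖²`. -/
noncomputable def fproj {d M : ℕ} (k : ℕ) (p : Matrix (Fin d) (Fin d) ℝ)
    (y : Fin M → (Fin d → ℝ)) : ℝ :=
  (1 / (M : ℝ)) * ∑ i, ((d : ℝ) / k) * sqnorm (p.mulVec (y i))

lemma sqnorm_nonneg {d : ℕ} (v : Fin d → ℝ) : 0 ≤ sqnorm v :=
  Finset.sum_nonneg fun i _ => sq_nonneg _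

lemma sqnorm_eq_zero {d : ℕ} {v : Fin d → ℝ} (h : sqnorm v = 0) : v = 0 := by
  funext i
  have := (Finset.sum_eq_zero_iff_of_nonneg (fun i (_ : i ∈ Finset.univ) => sq_nonneg (v i))).mp h
    i (Finset.mem_univ i)
  exact pow_eq_zero_iff two_ne_zero |>.mp this

/-- Covariance formula for means of scaled projected squared norms, under the
Grassmannian first and second moment identities. -/
theorem covariance_formula {Ω : Type*} [MeasurableSpace Ω] (μ : Measure Ω)
    [IsProbabilityMeasure μ] (d k M₁ M₂ : ℕ) (hk : 0 < k) (hkd : k ≤ d)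
    (hM₁ : 0 < M₁) (hM₂ : 0 < M₂)
    (P : Ω → Matrix (Fin d) (Fin d) ℝ)
    (hproj : ∀ ω, P ω * P ω = P ω ∧ (P ω).transpose = P ω ∧ (P ω).rank = k)
    (hmom1 : ∀ y : Fin d → ℝ,
      ∫ ω, sqnorm ((P ω).mulVec y) ∂μ = ((k : ℝ) / d) * sqnorm y)
    (hmom2 : ∀ y z : Fin d → ℝ,
      ∫ ω, sqnorm ((P ω).mulVec y) * sqnorm ((P ω).mulVec z) ∂μ =
        ((((d : ℝ) + 1) * k ^ 2 - 2 * k) * sqnorm y * sqnorm z +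
            2 * k * ((d : ℝ) - k) * (∑ l, y l * z l) ^ 2) /
          (((d : ℝ) - 1) * d * ((d : ℝ) + 2)))
    (y : Fin M₁ → (Fin d → ℝ)) (z : Fin M₂ → (Fin d → ℝ)) :
    (∫ ω, fproj k (P ω) y * fproj k (P ω) z ∂μ) -
        (∫ ω, fproj k (P ω) y ∂μ) * (∫ ω, fproj k (P ω) z ∂μ) =
      (2 * d * ((d : ℝ) - k) / ((k : ℝ) * ((d : ℝ) - 1) * ((d : ℝ) + 2))) /
          ((M₁ : ℝ) * M₂) * ∑ i, ∑ j, (∑ l, y i l * z j l) ^ 2 -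
        (2 * d * ((d : ℝ) - k) / ((k : ℝ) * ((d : ℝ) - 1) * ((d : ℝ) + 2))) / d *
          (((1 : ℝ) / M₁) * ∑ i, sqnorm (y i)) *
          (((1 : ℝ) / M₂) * ∑ j, sqnorm (z j)) := by
  rcases Nat.lt_or_ge d 2 with hd | hd2
  · -- degenerate case d = 1 (and hence k = 1): the hypotheses are contradictory
    exfalso
    have hd1 : d = 1 := by omega
    have hk1 : k = 1 := by omega
    subst hd1; subst hk1
    set y₀ : Fin 1 → ℝ := fun _ => (1 : ℝ) with hy₀
    have hsq : sqnorm y₀ = 1 := by simp [sqnorm, hy₀]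
    have hP : ∀ ω, (P ω).mulVec y₀ = y₀ := by
      intro ω
      obtain ⟨h1, _, h3⟩ := hproj ω
      have hne : P ω ≠ 0 := by
        intro h0
        rw [h0, Matrix.rank_zero] at h3
        omega
      have h00 : P ω 0 0 ≠ 0 := by
        intro h
        apply hne
        ext i j
        fin_cases i; fin_cases j
        simpa using h
      have hmul : P ω 0 0 * P ω 0 0 = P ω 0 0 := by
        have h' := congrArg (fun m : Matrix (Fin 1) (Fin 1) ℝ => m 0 0) h1
        simpa [Matrix.mul_apply, Fin.sum_univ_one] using h'
      have hone : P ω 0 0 = 1 := by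
        refine mul_right_cancel₀ h00 ?_
        rw [hmul, one_mul]
      funext i
      fin_cases i
      simp [Matrix.mulVec, dotProduct, Fin.sum_univ_one, hone, hy₀]
    have h2 := hmom2 y₀ y₀
    simp only [hP, hsq] at h2
    rw [integral_const] at h2
    norm_num at h2
  · -- main case d ≥ 2
    have hd0 : (0:ℝ) < d := by exact_mod_cast Nat.lt_of_lt_of_le Nat.zero_lt_two hd2
    have hk0 : (0:ℝ) < k := by exact_mod_cast hk
    have hd2' : (2:ℝ) ≤ d := by exact_mod_cast hd2
    have hk1' : (1:ℝ) ≤ k := by exact_mod_cast hk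
    have hkd' : (k:ℝ) ≤ d := by exact_mod_cast hkd
    have hdm1 : (0:ℝ) < (d:ℝ) - 1 := by linarith
    have hdp2 : (0:ℝ) < (d:ℝ) + 2 := by linarith
    have hqpos : (0:ℝ) < ((d:ℝ) - 1) * d * ((d:ℝ) + 2) :=
      mul_pos (mul_pos hdm1 hd0) hdp2
    have hM₁0 : ((M₁:ℝ)) ≠ 0 := by positivity
    have hM₂0 : ((M₂:ℝ)) ≠ 0 := by positivity
    -- integrability of the basic functions
    have int1 : ∀ a : Fin d → ℝ,
        Integrable (fun ω => sqnorm ((P ω).mulVec a)) μ := by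
      intro a
      by_cases ha : sqnorm a = 0
      · have h0 : a = 0 := sqnorm_eq_zero ha
        subst h0
        have : (fun ω => sqnorm ((P ω).mulVec (0 : Fin d → ℝ))) = fun _ => (0:ℝ) := by
          funext ω; simp [Matrix.mulVec_zero, sqnorm]
        rw [this]
        exact integrable_const 0
      · by_contra hni
        have h0 := integral_undef hni
        rw [hmom1 a] at h0
        have hpos : 0 < sqnorm a := lt_of_le_of_ne (sqnorm_nonneg a) (Ne.symm ha)
        exact absurd h0 (ne_of_gt (mul_pos (div_pos hk0 hd0) hpos))
    have int2 : ∀ a b : Fin d → ℝ,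
        Integrable (fun ω => sqnorm ((P ω).mulVec a) * sqnorm ((P ω).mulVec b)) μ := by
      intro a b
      by_cases ha : sqnorm a = 0
      · have h0 : a = 0 := sqnorm_eq_zero ha
        subst h0
        have : (fun ω => sqnorm ((P ω).mulVec (0 : Fin d → ℝ)) * sqnorm ((P ω).mulVec b)) =
            fun _ => (0:ℝ) := by
          funext ω; simp [Matrix.mulVec_zero, sqnorm]
        rw [this]; exact integrable_const 0
      by_cases hb : sqnorm b = 0
      · have h0 : b = 0 := sqnorm_eq_zero hb
        subst h0
        have : (fun ω => sqnorm ((P ω).mulVec a) * sqnorm ((P ω).mulVec (0 : Fin d → ℝ))) =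
            fun _ => (0:ℝ) := by
          funext ω; simp [Matrix.mulVec_zero, sqnorm]
        rw [this]; exact integrable_const 0
      · by_contra hni
        have h0 := integral_undef hni
        rw [hmom2 a b] at h0
        have hpa : 0 < sqnorm a := lt_of_le_of_ne (sqnorm_nonneg a) (Ne.symm ha)
        have hpb : 0 < sqnorm b := lt_of_le_of_ne (sqnorm_nonneg b) (Ne.symm hb)
        have hA : (0:ℝ) < ((d:ℝ) + 1) * k ^ 2 - 2 * k := by nlinarith
        have hB : (0:ℝ) ≤ 2 * k * ((d:ℝ) - k) := by nlinarith
        have hnum : (0:ℝ) < (((d : ℝ) + 1) * k ^ 2 - 2 * k) * sqnorm a * sqnorm b +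
            2 * k * ((d : ℝ) - k) * (∑ l, a l * b l) ^ 2 := by
          have hn := mul_nonneg hB (sq_nonneg (∑ l, a l * b l))
          have hp := mul_pos (mul_pos hA hpa) hpb
          linarith
        exact absurd h0 (ne_of_gt (div_pos hnum hqpos))
    -- first moments
    have hI1 : ∀ {M : ℕ} (w : Fin M → (Fin d → ℝ)),
        ∫ ω, fproj k (P ω) w ∂μ = (1 / (M:ℝ)) * ∑ i, sqnorm (w i) := by
      intro M w
      simp only [fproj]
      rw [MeasureTheory.integral_const_mul]
      congr 1
      rw [integral_finset_sum _ (fun i _ => (int1 (w i)).const_mul _)]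
      refine Finset.sum_congr rfl fun i _ => ?_
      rw [MeasureTheory.integral_const_mul, hmom1]
      field_simp
    -- second moment of the product
    have hI2 : ∫ ω, fproj k (P ω) y * fproj k (P ω) z ∂μ =
        (1 / (M₁:ℝ)) * (1 / (M₂:ℝ)) * ∑ i, ∑ j, ((d:ℝ)/k)^2 *
          (((((d : ℝ) + 1) * k ^ 2 - 2 * k) * sqnorm (y i) * sqnorm (z j) +
            2 * k * ((d : ℝ) - k) * (∑ l, y i l * z j l) ^ 2) /
          (((d : ℝ) - 1) * d * ((d : ℝ) + 2))) := by
      have expand : ∀ ω, fproj k (P ω) y * fproj k (P ω) z =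
          (1 / (M₁:ℝ)) * (1 / (M₂:ℝ)) * ∑ i, ∑ j, ((d:ℝ)/k)^2 *
            (sqnorm ((P ω).mulVec (y i)) * sqnorm ((P ω).mulVec (z j))) := by
        intro ω
        simp only [fproj]
        rw [mul_mul_mul_comm, Finset.sum_mul_sum]
        congr 1
        refine Finset.sum_congr rfl fun i _ => Finset.sum_congr rfl fun j _ => by ring
      simp only [expand]
      rw [MeasureTheory.integral_const_mul]
      congr 1
      rw [integral_finset_sum _
        (fun i _ => integrable_finset_sum _ (fun j _ => (int2 (y i) (z j)).const_mul _))]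
      refine Finset.sum_congr rfl fun i _ => ?_
      rw [integral_finset_sum _ (fun j _ => (int2 (y i) (z j)).const_mul _)]
      refine Finset.sum_congr rfl fun j _ => ?_
      rw [MeasureTheory.integral_const_mul, hmom2]
    have hsum : ∑ i, ∑ j, ((d:ℝ)/k)^2 *
          (((((d : ℝ) + 1) * k ^ 2 - 2 * k) * sqnorm (y i) * sqnorm (z j) +
            2 * k * ((d : ℝ) - k) * (∑ l, y i l * z j l) ^ 2) /
          (((d : ℝ) - 1) * d * ((d : ℝ) + 2))) =
        (((d:ℝ)/k)^2 * (((d : ℝ) + 1) * k ^ 2 - 2 * k) / (((d : ℝ) - 1) * d * ((d : ℝ) + 2))) *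
            ((∑ i, sqnorm (y i)) * (∑ j, sqnorm (z j))) +
          (((d:ℝ)/k)^2 * (2 * k * ((d : ℝ) - k)) / (((d : ℝ) - 1) * d * ((d : ℝ) + 2))) *
            (∑ i, ∑ j, (∑ l, y i l * z j l) ^ 2) := by
      rw [Finset.sum_mul_sum]
      simp only [Finset.mul_sum]
      rw [← Finset.sum_add_distrib]
      refine Finset.sum_congr rfl fun i _ => ?_
      rw [← Finset.sum_add_distrib]
      refine Finset.sum_congr rfl fun j _ => ?_
      ring
    rw [hI2, hsum, hI1 y, hI1 z]
    have hk0' : (k:ℝ) ≠ 0 := ne_of_gt hk0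
    have hd0' : (d:ℝ) ≠ 0 := ne_of_gt hd0
    have hdm1' : (d:ℝ) - 1 ≠ 0 := ne_of_gt hdm1
    have hdp2' : (d:ℝ) + 2 ≠ 0 := ne_of_gt hdp2
    field_simp
    ring
end

section
/- Under the same setup (random rank-k projection P with the Grassmannian moment identities, nonzero y_1,...,y_M with M ≤ d), the correlation Corr(f(P,y), f(P,ŷ)) is bounded below by (min_i‖y_i‖²)/(max_i‖y_i‖²) − (M/d)·(max_i‖y_i‖²)/(min_i‖y_i‖²). -/
open Finset MeasureTheory

lemma sqnorm_pos {d : ℕ} {v : Fin d → ℝ} (h : v ≠ 0) : 0 < sqnorm v := by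
  rcases (sqnorm_nonneg v).lt_or_eq with h'|h'
  · exact h'
  · exfalso; apply h; funext i
    have h2 := (Finset.sum_eq_zero_iff_of_nonneg (fun i _ => sq_nonneg (v i))).1 h'.symm i
      (Finset.mem_univ i)
    have := pow_eq_zero_iff (n := 2) (by norm_num) |>.1 h2
    simpa using this

lemma sqnorm_smul {d : ℕ} (c : ℝ) (v : Fin d → ℝ) : sqnorm (c • v) = c ^ 2 * sqnorm v := by
  simp [sqnorm, Finset.mul_sum, mul_pow]

lemma sqnorm_self {d : ℕ} (v : Fin d → ℝ) : (∑ l, v l * v l) = sqnorm v := by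
  simp [sqnorm, sq]

lemma integral_weighted_sum {Ω : Type*} [MeasurableSpace Ω] (μ : Measure Ω) {M : ℕ}
    (g : Fin M → Ω → ℝ) (E : Fin M → ℝ)
    (hE : ∀ i, (∫ ω, g i ω ∂μ) = E i)
    (hInt : ∀ i, Integrable (g i) μ) (w : Fin M → ℝ) :
    (∫ ω, ∑ i, w i * g i ω ∂μ) = ∑ i, w i * E i := by
  rw [integral_finset_sum _ fun i _ => (hInt i).const_mul (w i)]
  exact Finset.sum_congr rfl fun i _ => by rw [integral_const_mul, hE i]

lemma integral_weighted_prod {Ω : Type*} [MeasurableSpace Ω] (μ : Measure Ω) {M : ℕ}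
    (g : Fin M → Ω → ℝ) (E : Fin M → Fin M → ℝ)
    (hE : ∀ i j, (∫ ω, g i ω * g j ω ∂μ) = E i j)
    (hInt : ∀ i j, Integrable (fun ω => g i ω * g j ω) μ) (w v : Fin M → ℝ) :
    (∫ ω, (∑ i, w i * g i ω) * (∑ j, v j * g j ω) ∂μ) = ∑ i, ∑ j, w i * v j * E i j := by
  have h1 : ∀ ω, (∑ i, w i * g i ω) * (∑ j, v j * g j ω)
      = ∑ i, ∑ j, w i * v j * (g i ω * g j ω) := by
    intro ω; rw [Finset.sum_mul_sum]
    exact Finset.sum_congr rfl fun i _ => Finset.sum_congr rfl fun j _ => by ring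
  simp_rw [h1]
  rw [integral_finset_sum _ fun i _ => integrable_finset_sum _ fun j _ => (hInt i j).const_mul _]
  refine Finset.sum_congr rfl fun i _ => ?_
  rw [integral_finset_sum _ fun j _ => (hInt i j).const_mul _]
  exact Finset.sum_congr rfl fun j _ => by rw [integral_const_mul, hE i j]


set_option maxHeartbeats 1000000 in
lemma core_ineq {M d : ℕ} (hM : 0 < M) (hd : 0 < d) (hMd : M ≤ d)
    (q : Fin M → ℝ) (hq : ∀ i, 0 < q i)
    (s : Fin M → Fin M → ℝ) (hs : ∀ i j, 0 ≤ s i j) (hdiag : ∀ i, s i i = q i ^ 2)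
    (hVA' : 0 < ∑ i, ∑ j, (s i j - q i * q j / d))
    (hVB' : 0 < ∑ i, ∑ j, (q i)⁻¹ * (q j)⁻¹ * (s i j - q i * q j / d)) :
    (⨅ i, q i) / (⨆ i, q i) - ((M : ℝ) / d) * ((⨆ i, q i) / (⨅ i, q i)) ≤
      (∑ i, ∑ j, (q j)⁻¹ * (s i j - q i * q j / d)) /
        (Real.sqrt (∑ i, ∑ j, (s i j - q i * q j / d)) *
          Real.sqrt (∑ i, ∑ j, (q i)⁻¹ * (q j)⁻¹ * (s i j - q i * q j / d))) := by
  have hne : Nonempty (Fin M) := ⟨⟨0, hM⟩⟩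
  set m := ⨅ i, q i with hm_def
  set Mx := ⨆ i, q i with hMx_def
  have hmq : ∀ i, m ≤ q i := fun i => ciInf_le (Set.Finite.bddBelow (Set.finite_range q)) i
  have hqM : ∀ i, q i ≤ Mx := fun i => le_ciSup (Set.Finite.bddAbove (Set.finite_range q)) i
  have hm : 0 < m := by
    obtain ⟨i0, hi0⟩ := exists_eq_ciInf_of_finite (f := q)
    exact lt_of_lt_of_eq (hq i0) hi0
  have hMx : 0 < Mx := lt_of_lt_of_le hm (le_trans (hmq ⟨0, hM⟩) (hqM ⟨0, hM⟩))
  have hd0 : (0:ℝ) < d := by exact_mod_cast hd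
  have hM0 : (0:ℝ) < M := by exact_mod_cast hM
  have hMd' : (M:ℝ) ≤ d := by exact_mod_cast hMd
  set T := ∑ i, ∑ j, (q j)⁻¹ * (s i j - q i * q j / d) with hT_def
  set VA' := ∑ i, ∑ j, (s i j - q i * q j / d) with hVA_def
  set VB' := ∑ i, ∑ j, (q i)⁻¹ * (q j)⁻¹ * (s i j - q i * q j / d) with hVB_def
  set U := ∑ i, ∑ j, (q i)⁻¹ * (q j)⁻¹ * s i j with hU_def
  have hshat : ∀ i j, 0 ≤ (q i)⁻¹ * (q j)⁻¹ * s i j := fun i j =>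
    mul_nonneg (mul_nonneg (inv_nonneg.2 (hq i).le) (inv_nonneg.2 (hq j).le)) (hs i j)
  have hdiag1 : ∀ i, (q i)⁻¹ * (q i)⁻¹ * s i i = 1 := by
    intro i
    rw [hdiag i, show (q i)⁻¹ * (q i)⁻¹ * q i ^ 2 = (q i * (q i)⁻¹) * (q i * (q i)⁻¹) from by ring,
      mul_inv_cancel₀ (hq i).ne']
    norm_num
  have hconst : ∀ i j, (q i)⁻¹ * (q j)⁻¹ * (q i * q j / d) = 1/(d:ℝ) := by
    intro i j
    rw [show (q i)⁻¹ * (q j)⁻¹ * (q i * q j / d) = (q i * (q i)⁻¹) * (q j * (q j)⁻¹) * (1/d) from by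
      ring, mul_inv_cancel₀ (hq i).ne', mul_inv_cancel₀ (hq j).ne']
    ring
  -- U ≥ M
  have hU : (M:ℝ) ≤ U := by
    have h1 : (M:ℝ) = ∑ i : Fin M, (q i)⁻¹ * (q i)⁻¹ * s i i := by
      rw [Finset.sum_congr rfl fun i _ => hdiag1 i]; simp
    rw [h1]
    exact Finset.sum_le_sum fun i _ =>
      Finset.single_le_sum (f := fun j => (q i)⁻¹ * (q j)⁻¹ * s i j)
        (fun j _ => hshat i j) (Finset.mem_univ i)
  have hU_pos : 0 < U := lt_of_lt_of_le hM0 hU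
  -- T ≥ 0
  have hT0 : 0 ≤ T := by
    have hw : ∀ i, 0 ≤ ∑ j, (q i)⁻¹ * (q j)⁻¹ * (s i j - q i * q j / d) := by
      intro i
      have e1 : ∑ j, (q i)⁻¹ * (q j)⁻¹ * (s i j - q i * q j / d)
          = (∑ j, (q i)⁻¹ * (q j)⁻¹ * s i j) - (M:ℝ)/d := by
        simp_rw [mul_sub]
        rw [Finset.sum_sub_distrib]
        congr 1
        rw [Finset.sum_congr rfl fun j _ => hconst i j]
        simp [Finset.card_univ]
        ring
      rw [e1]
      have h2 : (1:ℝ) ≤ ∑ j, (q i)⁻¹ * (q j)⁻¹ * s i j := by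
        have := Finset.single_le_sum (f := fun j => (q i)⁻¹ * (q j)⁻¹ * s i j)
          (fun j _ => hshat i j) (Finset.mem_univ i)
        simp only [hdiag1 i] at this
        exact this
      have h3 : (M:ℝ)/d ≤ 1 := by rw [div_le_one hd0]; exact hMd'
      linarith
    have e2 : T = ∑ i, q i * ∑ j, (q i)⁻¹ * (q j)⁻¹ * (s i j - q i * q j / d) := by
      rw [hT_def]
      refine Finset.sum_congr rfl fun i _ => ?_
      rw [Finset.mul_sum]
      refine Finset.sum_congr rfl fun j _ => ?_
      rw [mul_assoc ((q i)⁻¹) ((q j)⁻¹) _, mul_inv_cancel_left₀ (hq i).ne']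
    rw [e2]
    exact Finset.sum_nonneg fun i _ => mul_nonneg (hq i).le (hw i)
  -- T lower bound
  have hT_lb : m * U - (M:ℝ)^2 * Mx / d ≤ T := by
    have perterm : ∀ i j, m * ((q i)⁻¹ * (q j)⁻¹ * s i j) - Mx/(d:ℝ)
        ≤ (q j)⁻¹ * (s i j - q i * q j / d) := by
      intro i j
      have e : (q j)⁻¹ * (s i j - q i * q j / d) = q i * ((q i)⁻¹ * (q j)⁻¹ * s i j) - q i / d := by
        rw [mul_sub, show q i * ((q i)⁻¹ * (q j)⁻¹ * s i j) = (q i * (q i)⁻¹) * ((q j)⁻¹ * s i j) from by ring,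
          mul_inv_cancel₀ (hq i).ne', one_mul,
          show (q j)⁻¹ * (q i * q j / d) = (q j * (q j)⁻¹) * (q i / d) from by ring,
          mul_inv_cancel₀ (hq j).ne', one_mul]
      rw [e]
      have h1 : m * ((q i)⁻¹ * (q j)⁻¹ * s i j) ≤ q i * ((q i)⁻¹ * (q j)⁻¹ * s i j) :=
        mul_le_mul_of_nonneg_right (hmq i) (hshat i j)
      have h2 : q i / (d:ℝ) ≤ Mx / d := (div_le_div_iff_of_pos_right hd0).2 (hqM i)
      linarith
    have step : ∑ i, ∑ j, (m * ((q i)⁻¹ * (q j)⁻¹ * s i j) - Mx/(d:ℝ)) ≤ T :=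
      Finset.sum_le_sum fun i _ => Finset.sum_le_sum fun j _ => perterm i j
    have lhs_eq : ∑ i, ∑ j, (m * ((q i)⁻¹ * (q j)⁻¹ * s i j) - Mx/(d:ℝ))
        = m * U - (M:ℝ)^2 * Mx / d := by
      simp_rw [Finset.sum_sub_distrib]
      congr 1
      · rw [hU_def, Finset.mul_sum]
        exact Finset.sum_congr rfl fun i _ => by rw [Finset.mul_sum]
      · simp [Finset.sum_const, Finset.card_univ]
        ring
    linarith [lhs_eq ▸ step]
  -- VA' ≤ Mx^2 * U
  have hVA_le : VA' ≤ Mx^2 * U := by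
    have perterm : ∀ i j, s i j - q i * q j / d ≤ Mx^2 * ((q i)⁻¹ * (q j)⁻¹ * s i j) := by
      intro i j
      have e : q i * q j * ((q i)⁻¹ * (q j)⁻¹ * s i j) = s i j := by
        rw [show q i * q j * ((q i)⁻¹ * (q j)⁻¹ * s i j)
            = (q i * (q i)⁻¹) * ((q j * (q j)⁻¹) * s i j) from by ring,
          mul_inv_cancel₀ (hq i).ne', mul_inv_cancel₀ (hq j).ne', one_mul, one_mul]
      have h1 : 0 ≤ (Mx * Mx - q i * q j) := by nlinarith [hqM i, hqM j, hq i, hq j]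
      have h2 := mul_nonneg h1 (hshat i j)
      have h3 : 0 ≤ q i * q j / d := div_nonneg (mul_nonneg (hq i).le (hq j).le) hd0.le
      nlinarith [h2, e, h3]
    calc VA' ≤ ∑ i, ∑ j, Mx^2 * ((q i)⁻¹ * (q j)⁻¹ * s i j) :=
          Finset.sum_le_sum fun i _ => Finset.sum_le_sum fun j _ => perterm i j
      _ = Mx^2 * U := by
          rw [hU_def, Finset.mul_sum]
          exact Finset.sum_congr rfl fun i _ => by rw [Finset.mul_sum]
  -- VB' ≤ U
  have hVB_le : VB' ≤ U := by
    refine Finset.sum_le_sum fun i _ => Finset.sum_le_sum fun j _ => ?_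
    have h3 : 0 ≤ (q i)⁻¹ * (q j)⁻¹ * (q i * q j / d) := by
      rw [hconst i j]; positivity
    nlinarith [h3]
  -- D bounds
  have hsVA : 0 < Real.sqrt VA' := Real.sqrt_pos.2 hVA'
  have hsVB : 0 < Real.sqrt VB' := Real.sqrt_pos.2 hVB'
  have hD_pos : 0 < Real.sqrt VA' * Real.sqrt VB' := mul_pos hsVA hsVB
  have hD_le : Real.sqrt VA' * Real.sqrt VB' ≤ Mx * U := by
    have h1 : Real.sqrt VA' ≤ Mx * Real.sqrt U := by
      calc Real.sqrt VA' ≤ Real.sqrt (Mx^2 * U) := Real.sqrt_le_sqrt hVA_le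
        _ = Mx * Real.sqrt U := by
            rw [Real.sqrt_mul (sq_nonneg Mx), Real.sqrt_sq hMx.le]
    have h2 : Real.sqrt VB' ≤ Real.sqrt U := Real.sqrt_le_sqrt hVB_le
    calc Real.sqrt VA' * Real.sqrt VB' ≤ (Mx * Real.sqrt U) * Real.sqrt U :=
          mul_le_mul h1 h2 hsVB.le (by positivity)
      _ = Mx * U := by rw [mul_assoc, Real.mul_self_sqrt hU_pos.le]
  -- conclude
  rcases le_or_gt (m / Mx - ((M : ℝ) / d) * (Mx / m)) 0 with hR | hR
  · exact le_trans hR (div_nonneg hT0 hD_pos.le)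
  · rw [le_div_iff₀ hD_pos]
    have key : (M:ℝ) * m ≤ Mx * U := by
      calc (M:ℝ) * m ≤ (M:ℝ) * Mx :=
            mul_le_mul_of_nonneg_left (le_trans (hmq ⟨0, hM⟩) (hqM ⟨0, hM⟩)) hM0.le
        _ ≤ U * Mx := mul_le_mul_of_nonneg_right hU hMx.le
        _ = Mx * U := mul_comm _ _
    have step1 : (m / Mx - ((M : ℝ) / d) * (Mx / m)) * (Real.sqrt VA' * Real.sqrt VB')
        ≤ (m / Mx - ((M : ℝ) / d) * (Mx / m)) * (Mx * U) :=
      mul_le_mul_of_nonneg_left hD_le hR.le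
    have step2 : (m / Mx - ((M : ℝ) / d) * (Mx / m)) * (Mx * U) ≤ T := by
      have expand : (m / Mx - ((M : ℝ) / d) * (Mx / m)) * (Mx * U)
          = m * U - (M:ℝ) * Mx^2 * U / (d * m) := by
        field_simp
      rw [expand]
      have h4 : (M:ℝ)^2 * Mx / d ≤ (M:ℝ) * Mx^2 * U / (d * m) := by
        rw [div_le_div_iff₀ hd0 (mul_pos hd0 hm)]
        nlinarith [mul_le_mul_of_nonneg_left key
          (show (0:ℝ) ≤ (d:ℝ) * ((M:ℝ) * Mx) from by positivity)]
      linarith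
    linarith


set_option maxHeartbeats 2000000 in
/-- Lower bound on the correlation between `f(P,y)` and `f(P,ŷ)` under the
Grassmannian moment identities and `M ≤ d`. -/
theorem correlation_lower_bound {Ω : Type*} [MeasurableSpace Ω] (μ : Measure Ω)
    [IsProbabilityMeasure μ] (d k M : ℕ) (hk : 0 < k) (hkd : k ≤ d)
    (hM : 0 < M) (hMd : M ≤ d)
    (P : Ω → Matrix (Fin d) (Fin d) ℝ)
    (hproj : ∀ ω, P ω * P ω = P ω ∧ (P ω).transpose = P ω ∧ (P ω).rank = k)
    (hmom1 : ∀ z : Fin d → ℝ,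
      ∫ ω, sqnorm ((P ω).mulVec z) ∂μ = ((k : ℝ) / d) * sqnorm z)
    (hmom2 : ∀ y z : Fin d → ℝ,
      ∫ ω, sqnorm ((P ω).mulVec y) * sqnorm ((P ω).mulVec z) ∂μ =
        ((((d : ℝ) + 1) * k ^ 2 - 2 * k) * sqnorm y * sqnorm z +
            2 * k * ((d : ℝ) - k) * (∑ l, y l * z l) ^ 2) /
          (((d : ℝ) - 1) * d * ((d : ℝ) + 2)))
    (y : Fin M → (Fin d → ℝ)) (hy : ∀ i, y i ≠ 0) :
    let yhat := fun i => (Real.sqrt (sqnorm (y i)))⁻¹ • y i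
    let Cov := (∫ ω, fproj k (P ω) y * fproj k (P ω) yhat ∂μ) -
      (∫ ω, fproj k (P ω) y ∂μ) * (∫ ω, fproj k (P ω) yhat ∂μ)
    let VA := (∫ ω, (fproj k (P ω) y) ^ 2 ∂μ) - (∫ ω, fproj k (P ω) y ∂μ) ^ 2
    let VB := (∫ ω, (fproj k (P ω) yhat) ^ 2 ∂μ) - (∫ ω, fproj k (P ω) yhat ∂μ) ^ 2
    0 < VA → 0 < VB →
      (⨅ i, sqnorm (y i)) / (⨆ i, sqnorm (y i)) -
          ((M : ℝ) / d) * ((⨆ i, sqnorm (y i)) / (⨅ i, sqnorm (y i))) ≤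
        Cov / (Real.sqrt VA * Real.sqrt VB) := by
  intro yhat Cov VA VB hVA hVB
  have hq : ∀ i, 0 < sqnorm (y i) := fun i => sqnorm_pos (hy i)
  have hd : 0 < d := lt_of_lt_of_le hk hkd
  -- dimension at least 2
  have hd2 : 2 ≤ d := by
    by_contra hcon
    have hd1 : d = 1 := by omega
    have hk1 : k = 1 := by omega
    have hM1 : M = 1 := by omega
    subst hd1; subst hk1; subst hM1
    replace hVA : 0 < (∫ ω, (fproj 1 (P ω) y) ^ 2 ∂μ) - (∫ ω, fproj 1 (P ω) y ∂μ) ^ 2 := hVA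
    have e1 : ∀ ω, fproj 1 (P ω) y = sqnorm ((P ω).mulVec (y 0)) := by
      intro ω; simp [fproj]
    have e2 : (∫ ω, (fproj 1 (P ω) y) ^ 2 ∂μ) = 0 := by
      have h : ∀ ω, (fproj 1 (P ω) y) ^ 2
          = sqnorm ((P ω).mulVec (y 0)) * sqnorm ((P ω).mulVec (y 0)) := by
        intro ω; rw [e1]; ring
      simp_rw [h]
      rw [hmom2 (y 0) (y 0), show ((((1:ℕ):ℝ) - 1) * (1:ℕ) * (((1:ℕ):ℝ) + 2)) = 0 by norm_num,
        div_zero]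
    have e3 : (∫ ω, fproj 1 (P ω) y ∂μ) = sqnorm (y 0) := by
      simp_rw [e1]
      rw [hmom1 (y 0)]; norm_num
    rw [e2, e3] at hVA
    nlinarith [hq 0]
  -- basic casts
  have hd0 : (0:ℝ) < d := by exact_mod_cast hd
  have hk0 : (0:ℝ) < k := by exact_mod_cast hk
  have hM0 : (0:ℝ) < M := by exact_mod_cast hM
  have hd2' : (2:ℝ) ≤ d := by exact_mod_cast hd2
  have hk1' : (1:ℝ) ≤ k := by exact_mod_cast hk
  have hkd' : (k:ℝ) ≤ d := by exact_mod_cast hkd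
  have hdm1 : ((d:ℝ) - 1) ≠ 0 := by linarith
  have hdp2 : ((d:ℝ) + 2) ≠ 0 := by linarith
  -- integrability
  have hgint : ∀ i, Integrable (fun ω => sqnorm ((P ω).mulVec (y i))) μ := by
    intro i; by_contra hcon
    have h := hmom1 (y i)
    rw [integral_undef hcon] at h
    have hpos : (0:ℝ) < (k:ℝ)/d * sqnorm (y i) := mul_pos (div_pos hk0 hd0) (hq i)
    linarith
  have hggint : ∀ i j, Integrable
      (fun ω => sqnorm ((P ω).mulVec (y i)) * sqnorm ((P ω).mulVec (y j))) μ := by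
    intro i j; by_contra hcon
    have h := hmom2 (y i) (y j)
    rw [integral_undef hcon] at h
    have h1 : (0:ℝ) < ((d:ℝ)+1)*k^2 - 2*k := by nlinarith
    have h2 : (0:ℝ) ≤ 2*(k:ℝ)*((d:ℝ)-k)*(∑ l, y i l * y j l)^2 :=
      mul_nonneg (mul_nonneg (mul_nonneg (by norm_num) hk0.le) (by linarith)) (sq_nonneg _)
    have hnum : 0 < (((d:ℝ)+1)*k^2 - 2*k) * sqnorm (y i) * sqnorm (y j)
        + 2*k*((d:ℝ)-k)*(∑ l, y i l * y j l)^2 := by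
      nlinarith [mul_pos (mul_pos h1 (hq i)) (hq j)]
    have hden : (0:ℝ) < ((d:ℝ)-1)*d*((d:ℝ)+2) :=
      mul_pos (mul_pos (by linarith) hd0) (by linarith)
    have := div_pos hnum hden
    linarith
  -- abbreviations
  set E2 : Fin M → Fin M → ℝ := fun i j =>
    ((((d : ℝ) + 1) * k ^ 2 - 2 * k) * sqnorm (y i) * sqnorm (y j) +
        2 * k * ((d : ℝ) - k) * (∑ l, y i l * y j l) ^ 2) /
      (((d : ℝ) - 1) * d * ((d : ℝ) + 2)) with hE2_def
  set c : ℝ := (1/(M:ℝ)) * ((d:ℝ)/k) with hc_def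
  have hc_pos : 0 < c := mul_pos (by positivity) (div_pos hd0 hk0)
  set β : ℝ := 2*(k:ℝ)*((d:ℝ)-k)/(((d:ℝ)-1)*(d:ℝ)*((d:ℝ)+2)) with hβ_def
  set C : ℝ := c^2 * β with hC_def
  -- integral identities for weighted sums
  have hsum1 : (∫ ω, ∑ i, (1:ℝ) * sqnorm ((P ω).mulVec (y i)) ∂μ)
      = ∑ i, (1:ℝ) * ((k:ℝ)/d * sqnorm (y i)) :=
    integral_weighted_sum μ _ _ (fun i => hmom1 (y i)) hgint (fun _ => 1)
  have hsumq : (∫ ω, ∑ i, (sqnorm (y i))⁻¹ * sqnorm ((P ω).mulVec (y i)) ∂μ)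
      = ∑ i, (sqnorm (y i))⁻¹ * ((k:ℝ)/d * sqnorm (y i)) :=
    integral_weighted_sum μ _ _ (fun i => hmom1 (y i)) hgint (fun i => (sqnorm (y i))⁻¹)
  have hprod11 : (∫ ω, (∑ i, (1:ℝ) * sqnorm ((P ω).mulVec (y i))) *
        (∑ j, (1:ℝ) * sqnorm ((P ω).mulVec (y j))) ∂μ)
      = ∑ i, ∑ j, (1:ℝ) * (1:ℝ) * E2 i j :=
    integral_weighted_prod μ _ E2 (fun i j => hmom2 (y i) (y j)) hggint (fun _ => 1) (fun _ => 1)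
  have hprod1q : (∫ ω, (∑ i, (1:ℝ) * sqnorm ((P ω).mulVec (y i))) *
        (∑ j, (sqnorm (y j))⁻¹ * sqnorm ((P ω).mulVec (y j))) ∂μ)
      = ∑ i, ∑ j, (1:ℝ) * (sqnorm (y j))⁻¹ * E2 i j :=
    integral_weighted_prod μ _ E2 (fun i j => hmom2 (y i) (y j)) hggint (fun _ => 1)
      (fun j => (sqnorm (y j))⁻¹)
  have hprodqq : (∫ ω, (∑ i, (sqnorm (y i))⁻¹ * sqnorm ((P ω).mulVec (y i))) *
        (∑ j, (sqnorm (y j))⁻¹ * sqnorm ((P ω).mulVec (y j))) ∂μ)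
      = ∑ i, ∑ j, (sqnorm (y i))⁻¹ * (sqnorm (y j))⁻¹ * E2 i j :=
    integral_weighted_prod μ _ E2 (fun i j => hmom2 (y i) (y j)) hggint
      (fun i => (sqnorm (y i))⁻¹) (fun j => (sqnorm (y j))⁻¹)
  -- pointwise forms of fproj
  have hAeq : ∀ ω, fproj k (P ω) y = c * ∑ i, (1:ℝ) * sqnorm ((P ω).mulVec (y i)) := by
    intro ω
    simp only [fproj, one_mul]
    rw [← Finset.mul_sum, hc_def]
    ring
  have hBeq : ∀ ω, fproj k (P ω) yhat
      = c * ∑ i, (sqnorm (y i))⁻¹ * sqnorm ((P ω).mulVec (y i)) := by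
    intro ω
    have hterm : ∀ i, sqnorm ((P ω).mulVec (yhat i))
        = (sqnorm (y i))⁻¹ * sqnorm ((P ω).mulVec (y i)) := by
      intro i
      rw [show yhat i = (Real.sqrt (sqnorm (y i)))⁻¹ • y i from rfl,
        Matrix.mulVec_smul, sqnorm_smul, inv_pow, Real.sq_sqrt (sqnorm_nonneg (y i))]
    simp only [fproj]
    rw [show (∑ i, (d:ℝ)/k * sqnorm ((P ω).mulVec (yhat i)))
        = ∑ i, (d:ℝ)/k * ((sqnorm (y i))⁻¹ * sqnorm ((P ω).mulVec (y i))) from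
      Finset.sum_congr rfl fun i _ => by rw [hterm i]]
    rw [show (∑ i, (d:ℝ)/k * ((sqnorm (y i))⁻¹ * sqnorm ((P ω).mulVec (y i))))
        = ∑ i, (d:ℝ)/k * ((fun i => (sqnorm (y i))⁻¹ * sqnorm ((P ω).mulVec (y i))) i) from rfl,
      ← Finset.mul_sum, hc_def]
    ring
  -- the five integrals
  have IA : (∫ ω, fproj k (P ω) y ∂μ) = c * ∑ i, (1:ℝ) * ((k:ℝ)/d * sqnorm (y i)) := by
    simp_rw [hAeq]; rw [integral_const_mul, hsum1]
  have IB : (∫ ω, fproj k (P ω) yhat ∂μ)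
      = c * ∑ i, (sqnorm (y i))⁻¹ * ((k:ℝ)/d * sqnorm (y i)) := by
    simp_rw [hBeq]; rw [integral_const_mul, hsumq]
  have IAB : (∫ ω, fproj k (P ω) y * fproj k (P ω) yhat ∂μ)
      = c^2 * ∑ i, ∑ j, (1:ℝ) * (sqnorm (y j))⁻¹ * E2 i j := by
    have h : ∀ ω, fproj k (P ω) y * fproj k (P ω) yhat
        = c^2 * ((∑ i, (1:ℝ) * sqnorm ((P ω).mulVec (y i))) *
            (∑ j, (sqnorm (y j))⁻¹ * sqnorm ((P ω).mulVec (y j)))) := by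
      intro ω; rw [hAeq ω, hBeq ω]; ring
    simp_rw [h]; rw [integral_const_mul, hprod1q]
  have IA2 : (∫ ω, (fproj k (P ω) y) ^ 2 ∂μ)
      = c^2 * ∑ i, ∑ j, (1:ℝ) * (1:ℝ) * E2 i j := by
    have h : ∀ ω, (fproj k (P ω) y) ^ 2
        = c^2 * ((∑ i, (1:ℝ) * sqnorm ((P ω).mulVec (y i))) *
            (∑ j, (1:ℝ) * sqnorm ((P ω).mulVec (y j)))) := by
      intro ω; rw [hAeq ω]; ring
    simp_rw [h]; rw [integral_const_mul, hprod11]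
  have IB2 : (∫ ω, (fproj k (P ω) yhat) ^ 2 ∂μ)
      = c^2 * ∑ i, ∑ j, (sqnorm (y i))⁻¹ * (sqnorm (y j))⁻¹ * E2 i j := by
    have h : ∀ ω, (fproj k (P ω) yhat) ^ 2
        = c^2 * ((∑ i, (sqnorm (y i))⁻¹ * sqnorm ((P ω).mulVec (y i))) *
            (∑ j, (sqnorm (y j))⁻¹ * sqnorm ((P ω).mulVec (y j)))) := by
      intro ω; rw [hBeq ω]; ring
    simp_rw [h]; rw [integral_const_mul, hprodqq]
  -- key algebraic identity
  have E2id : ∀ i j, E2 i j - ((k:ℝ)/d * sqnorm (y i)) * ((k:ℝ)/d * sqnorm (y j))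
      = β * ((∑ l, y i l * y j l)^2 - sqnorm (y i) * sqnorm (y j) / d) := by
    intro i j
    rw [hE2_def, hβ_def]
    field_simp
    ring
  -- combination identity
  have combine : ∀ w v : Fin M → ℝ,
      c^2 * (∑ i, ∑ j, w i * v j * E2 i j) -
        (c * ∑ i, w i * ((k:ℝ)/d * sqnorm (y i))) * (c * ∑ j, v j * ((k:ℝ)/d * sqnorm (y j)))
      = C * ∑ i, ∑ j, w i * v j *
          ((∑ l, y i l * y j l)^2 - sqnorm (y i) * sqnorm (y j) / d) := by
    intro w v
    have e1 : (∑ i, w i * ((k:ℝ)/d * sqnorm (y i))) * (∑ j, v j * ((k:ℝ)/d * sqnorm (y j)))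
        = ∑ i, ∑ j, (w i * ((k:ℝ)/d * sqnorm (y i))) * (v j * ((k:ℝ)/d * sqnorm (y j))) :=
      Finset.sum_mul_sum _ _ _ _
    have e2 : c^2 * (∑ i, ∑ j, w i * v j * E2 i j) -
        (c * ∑ i, w i * ((k:ℝ)/d * sqnorm (y i))) * (c * ∑ j, v j * ((k:ℝ)/d * sqnorm (y j)))
        = c^2 * ((∑ i, ∑ j, w i * v j * E2 i j) -
            ∑ i, ∑ j, (w i * ((k:ℝ)/d * sqnorm (y i))) * (v j * ((k:ℝ)/d * sqnorm (y j)))) := by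
      rw [← e1]; ring
    rw [e2]
    simp_rw [← Finset.sum_sub_distrib]
    rw [hC_def]
    simp_rw [Finset.mul_sum]
    refine Finset.sum_congr rfl fun i _ => Finset.sum_congr rfl fun j _ => ?_
    have := E2id i j
    linear_combination (c^2 * (w i * v j)) * this
  -- express Cov, VA, VB
  have hCovEq : Cov = C * (∑ i, ∑ j, (1:ℝ) * (sqnorm (y j))⁻¹ *
      ((∑ l, y i l * y j l)^2 - sqnorm (y i) * sqnorm (y j) / d)) := by
    show (∫ ω, fproj k (P ω) y * fproj k (P ω) yhat ∂μ) -
      (∫ ω, fproj k (P ω) y ∂μ) * (∫ ω, fproj k (P ω) yhat ∂μ) = _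
    rw [IAB, IA, IB]
    exact combine _ _
  have hVAEq : VA = C * (∑ i, ∑ j, (1:ℝ) * (1:ℝ) *
      ((∑ l, y i l * y j l)^2 - sqnorm (y i) * sqnorm (y j) / d)) := by
    show (∫ ω, (fproj k (P ω) y) ^ 2 ∂μ) - (∫ ω, fproj k (P ω) y ∂μ) ^ 2 = _
    rw [IA2, IA, sq (c * ∑ i, (1:ℝ) * ((k:ℝ)/d * sqnorm (y i)))]
    exact combine _ _
  have hVBEq : VB = C * (∑ i, ∑ j, (sqnorm (y i))⁻¹ * (sqnorm (y j))⁻¹ *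
      ((∑ l, y i l * y j l)^2 - sqnorm (y i) * sqnorm (y j) / d)) := by
    show (∫ ω, (fproj k (P ω) yhat) ^ 2 ∂μ) - (∫ ω, fproj k (P ω) yhat ∂μ) ^ 2 = _
    rw [IB2, IB, sq (c * ∑ i, (sqnorm (y i))⁻¹ * ((k:ℝ)/d * sqnorm (y i)))]
    exact combine _ _
  -- positivity of the common factor
  have hβ0 : (0:ℝ) ≤ β := by
    rw [hβ_def]
    apply div_nonneg
    · exact mul_nonneg (mul_nonneg (by norm_num) hk0.le) (by linarith)
    · exact mul_nonneg (mul_nonneg (by linarith) hd0.le) (by linarith)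
  have hC0 : (0:ℝ) ≤ C := by rw [hC_def]; exact mul_nonneg (sq_nonneg c) hβ0
  rw [hVAEq] at hVA
  rw [hVBEq] at hVB
  have hCpos : 0 < C := by
    rcases hC0.lt_or_eq with h|h
    · exact h
    · exfalso; rw [← h, zero_mul] at hVA; exact lt_irrefl 0 hVA
  have hVAs : 0 < ∑ i, ∑ j, (1:ℝ) * (1:ℝ) *
      ((∑ l, y i l * y j l)^2 - sqnorm (y i) * sqnorm (y j) / d) := by
    by_contra hcon; push_neg at hcon
    nlinarith [hVA, mul_nonneg hC0 (neg_nonneg.2 hcon)]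
  have hVBs : 0 < ∑ i, ∑ j, (sqnorm (y i))⁻¹ * (sqnorm (y j))⁻¹ *
      ((∑ l, y i l * y j l)^2 - sqnorm (y i) * sqnorm (y j) / d) := by
    by_contra hcon; push_neg at hcon
    nlinarith [hVB, mul_nonneg hC0 (neg_nonneg.2 hcon)]
  rw [hCovEq, hVAEq, hVBEq]
  rw [Real.sqrt_mul hC0 _, Real.sqrt_mul hC0 _, mul_mul_mul_comm, Real.mul_self_sqrt hC0,
    mul_div_mul_left _ _ hCpos.ne']
  simp only [one_mul] at hVAs ⊢
  have hdiag : ∀ i, (∑ l, y i l * y i l)^2 = sqnorm (y i)^2 := fun i => by rw [sqnorm_self]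
  exact core_ineq hM hd hMd (fun i => sqnorm (y i)) hq
    (fun i j => (∑ l, y i l * y j l)^2) (fun i j => sq_nonneg _) hdiag hVAs hVBs
end

section
/- Let X_1,...,X_m ∈ R^d be random points whose coordinates (across all points) are i.i.d. real random variables with uniformly bounded fourth moments, and suppose the squared differences have per-coordinate mean μ > 0 and variance σ² > 0 independent of d. Then the ratio min_{i≠j}‖X_i − X_j‖² / max_{i≠j}‖X_i − X_j‖² converges to 1 in probability as d → ∞. -/
open Finset MeasureTheory

/-- The ratio of the minimal to the maximal pairwise squared distance of
random points converges to `1` in probability as the dimension `d → ∞`,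
when each squared pairwise distance is a sum of `d` i.i.d. terms with mean
`μ₀` and variance `σ²`. -/
theorem minmax_ratio_tendsto (m : ℕ) (hm : 2 ≤ m) (μ₀ σ : ℝ)
    (hμ₀ : 0 < μ₀) (hσ : 0 < σ)
    (Ω : ℕ → Type*) [∀ d, MeasurableSpace (Ω d)]
    (μ : (d : ℕ) → Measure (Ω d)) [∀ d, IsProbabilityMeasure (μ d)]
    (X : (d : ℕ) → Fin m → Ω d → (Fin d → ℝ))
    (hmeas : ∀ d i, Measurable (X d i))
    (hmean : ∀ d, ∀ i j : Fin m, i ≠ j →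
      ∫ ω, sqnorm (X d i ω - X d j ω) ∂(μ d) = (d : ℝ) * μ₀)
    (hvar : ∀ d, ∀ i j : Fin m, i ≠ j →
      ∫ ω, (sqnorm (X d i ω - X d j ω) - (d : ℝ) * μ₀) ^ 2 ∂(μ d) = (d : ℝ) * σ ^ 2) :
    ∀ ε > (0 : ℝ),
      Filter.Tendsto
        (fun d => (μ d {ω | ε <
          |(⨅ p : {p : Fin m × Fin m // p.1 ≠ p.2},
              sqnorm (X d p.val.1 ω - X d p.val.2 ω)) /
            (⨆ p : {p : Fin m × Fin m // p.1 ≠ p.2},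
              sqnorm (X d p.val.1 ω - X d p.val.2 ω)) - 1|}).toReal)
        Filter.atTop (nhds 0) := by
  intro ε hε
  set ι := {p : Fin m × Fin m // p.1 ≠ p.2}
  haveI hι : Nonempty ι := by
    refine ⟨⟨(⟨0, by omega⟩, ⟨1, by omega⟩), ?_⟩⟩
    simp [Prod.ext_iff, Fin.ext_iff]
  set η : ℝ := min (ε / 2) (1 / 2) with hηdef
  have hη0 : 0 < η := lt_min (by linarith) (by norm_num)
  have hη1 : η ≤ 1 / 2 := min_le_right _ _
  have hηε : 2 * η ≤ ε := by
    have := min_le_left (ε / 2) (1 / 2); linarith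
  set C : ℝ := (Fintype.card ι : ℝ) * σ ^ 2 / (η ^ 2 * μ₀ ^ 2) with hC
  have hbound : ∀ d : ℕ, 1 ≤ d →
      (μ d {ω | ε <
          |(⨅ p : ι, sqnorm (X d p.val.1 ω - X d p.val.2 ω)) /
            (⨆ p : ι, sqnorm (X d p.val.1 ω - X d p.val.2 ω)) - 1|}).toReal
        ≤ C * (1 / d) := by
    intro d hd
    have hd0 : (0 : ℝ) < d := by exact_mod_cast hd
    set S : ι → Ω d → ℝ := fun p ω => sqnorm (X d p.val.1 ω - X d p.val.2 ω) with hS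
    set c : ℝ := η * (d * μ₀) with hc
    have hc0 : 0 < c := by positivity
    set B : ι → Set (Ω d) := fun p => {ω | c ^ 2 ≤ (S p ω - d * μ₀) ^ 2} with hB
    -- inclusion of the bad event into the union of per-pair bad events
    have hsub : {ω | ε <
          |(⨅ p : ι, S p ω) / (⨆ p : ι, S p ω) - 1|} ⊆ ⋃ p : ι, B p := by
      intro ω hω
      by_contra hcon
      simp only [Set.mem_iUnion, not_exists, hB, Set.mem_setOf_eq, not_le] at hcon
      -- every S p ω lies in [(1-η)dμ₀, (1+η)dμ₀]
      have hab : ∀ p : ι, (1 - η) * (d * μ₀) ≤ S p ω ∧ S p ω ≤ (1 + η) * (d * μ₀) := by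
        intro p
        have h := hcon p
        have habs : |S p ω - d * μ₀| < c := by
          have := abs_nonneg (S p ω - d * μ₀)
          nlinarith [sq_abs (S p ω - d * μ₀)]
        rw [abs_lt] at habs
        constructor <;> nlinarith
      have ha0 : 0 < (1 - η) * (d * μ₀) := by
        have h1η : (0:ℝ) < 1 - η := by linarith
        exact mul_pos h1η (by positivity)
      have hbdda : BddAbove (Set.range fun p : ι => S p ω) := Finite.bddAbove_range _
      have hbddb : BddBelow (Set.range fun p : ι => S p ω) := Finite.bddBelow_range _
      obtain ⟨p₀⟩ := id hι
      have hinf : (1 - η) * (d * μ₀) ≤ ⨅ p : ι, S p ω :=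
        le_ciInf fun p => (hab p).1
      have hsup : (⨆ p : ι, S p ω) ≤ (1 + η) * (d * μ₀) :=
        ciSup_le fun p => (hab p).2
      have hinfsup : (⨅ p : ι, S p ω) ≤ ⨆ p : ι, S p ω :=
        le_trans (ciInf_le hbddb p₀) (le_ciSup hbdda p₀)
      have hsup0 : 0 < ⨆ p : ι, S p ω :=
        lt_of_lt_of_le ha0 (le_trans (hab p₀).1 (le_ciSup hbdda p₀))
      have h1 : (⨅ p : ι, S p ω) / (⨆ p : ι, S p ω) ≤ 1 :=
        (div_le_one hsup0).mpr hinfsup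
      have h2 : 1 - ε ≤ (⨅ p : ι, S p ω) / (⨆ p : ι, S p ω) := by
        have hstep : ((1 - η) * (d * μ₀)) / ((1 + η) * (d * μ₀)) ≤
            (⨅ p : ι, S p ω) / (⨆ p : ι, S p ω) :=
          div_le_div₀ (le_trans (le_of_lt ha0) hinf) hinf hsup0 hsup
        have heq : ((1 - η) * (d * μ₀)) / ((1 + η) * (d * μ₀)) = (1 - η) / (1 + η) := by
          rw [mul_div_mul_right]
          positivity
        have : 1 - ε ≤ (1 - η) / (1 + η) := by
          rw [le_div_iff₀ (by linarith : (0:ℝ) < 1 + η)]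
          nlinarith
        linarith [heq ▸ hstep]
      rw [Set.mem_setOf_eq, lt_abs] at hω
      rcases hω with h | h
      · linarith
      · linarith
    -- Chebyshev bound for each pair
    have hcheb : ∀ p : ι, (μ d (B p)).toReal ≤ (d * σ ^ 2) / c ^ 2 := by
      intro p
      have hij := p.property
      have hV : ∫ ω, (S p ω - d * μ₀) ^ 2 ∂(μ d) = (d : ℝ) * σ ^ 2 :=
        hvar d p.val.1 p.val.2 hij
      have hV0 : (0:ℝ) < d * σ ^ 2 := by positivity
      have hint : Integrable (fun ω => (S p ω - d * μ₀) ^ 2) (μ d) := by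
        by_contra hni
        rw [integral_undef hni] at hV
        linarith
      have hmar := mul_meas_ge_le_integral_of_nonneg
        (Filter.Eventually.of_forall fun ω => sq_nonneg (S p ω - d * μ₀)) hint (c ^ 2)
      rw [hV] at hmar
      have hc2 : (0:ℝ) < c ^ 2 := by positivity
      have hT : (μ d (B p)).toReal
          = ((μ d) {x | c ^ 2 ≤ (S p x - (d:ℝ) * μ₀) ^ 2}).toReal := rfl
      rw [hT, le_div_iff₀ hc2]
      rw [measureReal_def] at hmar
      linarith [hmar]
    -- combine
    calc (μ d {ω | ε < |(⨅ p : ι, S p ω) / (⨆ p : ι, S p ω) - 1|}).toReal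
        ≤ (μ d (⋃ p : ι, B p)).toReal := by
          apply ENNReal.toReal_mono (measure_ne_top _ _) (measure_mono hsub)
      _ ≤ ∑ p : ι, (μ d (B p)).toReal := by
          rw [← ENNReal.toReal_sum (fun p _ => measure_ne_top _ _)]
          exact ENNReal.toReal_mono (by
            exact ENNReal.sum_ne_top.mpr fun p _ => measure_ne_top _ _)
            (measure_iUnion_fintype_le _ _)
      _ ≤ ∑ p : ι, (d * σ ^ 2) / c ^ 2 := Finset.sum_le_sum fun p _ => hcheb p
      _ = (Fintype.card ι : ℝ) * ((d * σ ^ 2) / c ^ 2) := by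
          rw [Finset.sum_const, Finset.card_univ, nsmul_eq_mul]
      _ = C * (1 / d) := by
          rw [hC, hc]
          field_simp
  have hC0 : Filter.Tendsto (fun d : ℕ => C * (1 / d)) Filter.atTop (nhds 0) := by
    have := tendsto_one_div_atTop_nhds_zero_nat.const_mul C
    simpa using this
  apply squeeze_zero' (Filter.Eventually.of_forall fun d => ENNReal.toReal_nonneg) _ hC0
  filter_upwards [Filter.eventually_ge_atTop 1] with d hd
  exact hbound d hd
end
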